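/- Let 0 < p < 1/2, 0 < ε < 1/2 − p, and 0 ≤ σ ≤ p + 2ε with σ < 1/2. For real pairs (a₀, a₁) with 0 ≤ a₀ ≤ 1−2σ, 0 ≤ a₁ ≤ 2σ, a₀+a₁ ∈ [p−ε, p+ε], and a₀+2σ−a₁ ∈ [p−ε, p+ε], the quantity (1−2σ)·h(a₀/(1−2σ)) + 2σ·h(a₁/(2σ)) is at most (1−2σ)·h((p−σ+ε)/(1−2σ)) + 2σ. -/

import Mathlib

/-!
The `2σ`-block contributes at most its weight since `h ≤ 1`. Averaging the constraints
`a₀ + a₁ ≤ p + ε` and `a₀ + 2σ - a₁ ≤ p + ε` gives `a₀ ≤ p - σ + ε`, and `ε < 1/2 - p` puts this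
below half the weight `1 - 2σ`, where `h` is increasing.
-/

/-- Binary entropy function (base-2 logarithm). -/
noncomputable def binH (q : ℝ) : ℝ := -q * Real.logb 2 q - (1 - q) * Real.logb 2 (1 - q)

lemma binH_eq_binEntropy_div_log_two (q : ℝ) : binH q = Real.binEntropy q / Real.log 2 := by
  simp only [binH, Real.binEntropy, Real.logb, Real.log_inv]
  ring

lemma binH_le_one (q : ℝ) : binH q ≤ 1 := by
  rw [binH_eq_binEntropy_div_log_two, div_le_one (Real.log_pos one_lt_two)]
  exact Real.binEntropy_le_log_two

lemma binH_le_binH {a b : ℝ} (ha : 0 ≤ a) (hab : a ≤ b) (hb : b ≤ 1 / 2) :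
    binH a ≤ binH b := by
  simp only [binH_eq_binEntropy_div_log_two]
  gcongr
  exact Real.binEntropy_strictMonoOn.monotoneOn ⟨ha, by linarith⟩ ⟨by linarith, by linarith⟩ hab

lemma mul_binH_div_le_self {w : ℝ} (hw : 0 ≤ w) (a : ℝ) : w * binH (a / w) ≤ w :=
  mul_le_of_le_one_right hw (binH_le_one _)

lemma mul_binH_div_le_mul_binH_div {w a b : ℝ} (hw : 0 < w) (ha : 0 ≤ a) (hab : a ≤ b)
    (hb : b ≤ w / 2) : w * binH (a / w) ≤ w * binH (b / w) := by
  gcongr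
  refine binH_le_binH (div_nonneg ha hw.le) (by gcongr) ?_
  rw [div_le_iff₀ hw]
  linarith

theorem entropy_sum_max_general (p ε σ a₀ a₁ : ℝ)
    (hε1 : ε < 1/2 - p)
    (hσ0 : 0 ≤ σ) (hσhalf : σ < 1/2)
    (ha0 : 0 ≤ a₀)
    (hsum2 : a₀ + a₁ ≤ p + ε)
    (hsum4 : a₀ + 2*σ - a₁ ≤ p + ε) :
    (1 - 2*σ) * binH (a₀ / (1 - 2*σ)) + 2*σ * binH (a₁ / (2*σ)) ≤
      (1 - 2*σ) * binH ((p - σ + ε) / (1 - 2*σ)) + 2*σ := by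
  have hbulk : (1 - 2*σ) * binH (a₀ / (1 - 2*σ)) ≤ (1 - 2*σ) * binH ((p - σ + ε) / (1 - 2*σ)) :=
    mul_binH_div_le_mul_binH_div (by linarith) ha0 (by linarith) (by linarith)
  have hside : 2*σ * binH (a₁ / (2*σ)) ≤ 2*σ := mul_binH_div_le_self (by linarith) _
  linarith

theorem entropy_sum_max (p ε σ a₀ a₁ : ℝ)
    (hp0 : 0 < p) (hp1 : p < 1/2) (hε0 : 0 < ε) (hε1 : ε < 1/2 - p)
    (hσ0 : 0 ≤ σ) (hσ : σ ≤ p + 2*ε) (hσhalf : σ < 1/2)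
    (ha0 : 0 ≤ a₀) (ha0' : a₀ ≤ 1 - 2*σ) (ha1 : 0 ≤ a₁) (ha1' : a₁ ≤ 2*σ)
    (hsum1 : p - ε ≤ a₀ + a₁) (hsum2 : a₀ + a₁ ≤ p + ε)
    (hsum3 : p - ε ≤ a₀ + 2*σ - a₁) (hsum4 : a₀ + 2*σ - a₁ ≤ p + ε) :
    (1 - 2*σ) * binH (a₀ / (1 - 2*σ)) + 2*σ * binH (a₁ / (2*σ)) ≤
      (1 - 2*σ) * binH ((p - σ + ε) / (1 - 2*σ)) + 2*σ :=
  entropy_sum_max_general p ε σ a₀ a₁ hε1 hσ0 hσhalf ha0 hsum2 hsum4
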